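/- Let p be a prime and x a p-adic integer, and set s := (x + ⟨−x⟩_p)/p. Then (x)_p (1−x)_p / (p!)^2 ≡ s(1−s)·(1 + 2p·H_{⟨−x⟩_p}) (mod p^2). -/

import Mathlib

/-!
Write `x = p t - r` with `r = ⟨-x⟩_p`, so that `s = t`, and let `m = p - 1 - r`. Splitting off
the factors `x + r = p t` and `(1 - x) + m = p (1 - t)`, the product `(x)_p (1 - x)_p` is
`p² t (1 - t)` times four rising factorials `(1 ± p c)_r`, `(1 ± p c)_m`. Modulo `p²` each of them
is linear in `p`: `(1 + u)_n ≡ n! + D_n u`, where `D_n = n! H_n` is the derivative of `(X)_n` at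
`1`. For odd `p`, computing `(p - 1)!` from either end, `(-1)^m r! (1 - p)_m = (-1)^r m! (1 - p)_r`,
gives `r! D_m ≡ m! D_r (mod p)`, i.e. `H_r ≡ H_{p-1-r}`; this cancels the first-order terms of the
four factors and leaves `((p - 1)!)² (1 + 2 p H_r)`. The case `p = 2` is a direct computation.
-/

/-- The harmonic number `H_n = ∑_{j=1}^n 1/j`. -/
def harm (n : ℕ) : ℚ := ∑ j ∈ Finset.Icc 1 n, 1 / (j : ℚ)

open Polynomial Nat

section CommRing

variable {R : Type*} [CommRing R]

noncomputable def ascPochhammerCofactor (r m : ℕ) (y : R) : R :=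
  (-1) ^ r * (ascPochhammer R r).eval (1 - y) * (ascPochhammer R m).eval (1 + y)

theorem ascPochhammer_eval_reflect (n : ℕ) (a : R) :
    (ascPochhammer R n).eval a = (-1) ^ n * (ascPochhammer R n).eval (1 - n - a) := by
  rw [← neg_neg a, ascPochhammer_eval_neg_eq_descPochhammer, descPochhammer_eval_eq_ascPochhammer]
  ring_nf

theorem ascPochhammer_eval_sub_natCast (r m : ℕ) (y : R) :
    (ascPochhammer R (r + 1 + m)).eval (y - r) = y * ascPochhammerCofactor r m y := by
  rw [add_assoc, ← ascPochhammer_mul, add_comm 1, ascPochhammer_succ_left, eval_mul, eval_comp,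
    eval_mul, eval_comp, ascPochhammer_eval_reflect r]
  simp only [ascPochhammerCofactor, eval_add, eval_X, eval_one, eval_natCast]
  ring_nf

theorem cast_factorial_add_eq_ascPochhammer_eval (r m : ℕ) :
    ((r + m)! : R) = (-1) ^ m * r ! * (ascPochhammer R m).eval (1 - ((r + 1 + m : ℕ) : R)) := by
  rw [← factorial_mul_ascPochhammer, ascPochhammer_eval_reflect m]
  push_cast
  ring_nf

theorem map_ascPochhammer_eval {S : Type*} [CommRing S] (f : R →+* S) (n : ℕ) (a : R) :
    f ((ascPochhammer R n).eval a) = (ascPochhammer S n).eval (f a) := by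
  rw [ascPochhammer_eval₂ f, eval₂_at_apply]

theorem map_ascPochhammer_derivative_eval {S : Type*} [CommRing S] (f : R →+* S) (n : ℕ)
    (a : R) : f ((ascPochhammer R n).derivative.eval a) =
      (ascPochhammer S n).derivative.eval (f a) := by
  rw [← ascPochhammer_map f, derivative_map, eval_map, eval₂_at_apply]

theorem map_ascPochhammerCofactor {S : Type*} [CommRing S] (f : R →+* S) (r m : ℕ) (y : R) :
    f (ascPochhammerCofactor r m y) = ascPochhammerCofactor r m (f y) := by
  simp [ascPochhammerCofactor, map_ascPochhammer_eval]

theorem ascPochhammer_eval_one_add_of_sq_eq_zero (n : ℕ) {u : R} (hu : u ^ 2 = 0) :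
    (ascPochhammer R n).eval (1 + u) = n ! + (ascPochhammer R n).derivative.eval 1 * u := by
  rw [eval_add_of_sq_eq_zero _ _ _ hu, ascPochhammer_eval_one]

theorem ascPochhammer_eval_one_sub_of_sq_eq_zero (n : ℕ) {u : R} (hu : u ^ 2 = 0) :
    (ascPochhammer R n).eval (1 - u) = (n ! : R) - (ascPochhammer R n).derivative.eval 1 * u := by
  simpa [← sub_eq_add_neg] using ascPochhammer_eval_one_add_of_sq_eq_zero n (u := -u) (by simpa)

theorem cast_factorial_add_of_sq_eq_zero (r m : ℕ) (hP : ((r + 1 + m : ℕ) : R) ^ 2 = 0) :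
    ((r + m)! : R) =
      (-1) ^ m * (r ! * ((m ! : R) - (ascPochhammer R m).derivative.eval 1 * (r + 1 + m : ℕ))) := by
  rw [cast_factorial_add_eq_ascPochhammer_eval, ascPochhammer_eval_one_sub_of_sq_eq_zero m hP]
  ring

theorem natCast_mul_factorial_mul_derivative_eval_symm (r m : ℕ) (hrm : Even (r + m))
    (hP : ((r + 1 + m : ℕ) : R) ^ 2 = 0) :
    ((r + 1 + m : ℕ) : R) * (m ! * (ascPochhammer R r).derivative.eval 1) =
      (r + 1 + m : ℕ) * (r ! * (ascPochhammer R m).derivative.eval 1) := by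
  have hF₁ := cast_factorial_add_of_sq_eq_zero r m hP
  have hF₂ := cast_factorial_add_of_sq_eq_zero m r (by rwa [show m + 1 + r = r + 1 + m by omega])
  rw [add_comm m r, show m + 1 + r = r + 1 + m by omega] at hF₂
  have hsign : ((-1 : R) ^ r) * (-1) ^ m = 1 := by rw [← pow_add, hrm.neg_one_pow]
  have hm2 : ((-1 : R) ^ m) ^ 2 = 1 := by rw [← pow_mul, pow_mul']; simp
  linear_combination (-1) ^ m * hF₂ - (-1) ^ m * hF₁
    + (r ! * (m ! : R) - m ! * (ascPochhammer R r).derivative.eval 1 * (r + 1 + m : ℕ)) * hsign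
    - (r ! * (m ! : R) - r ! * (ascPochhammer R m).derivative.eval 1 * (r + 1 + m : ℕ)) * hm2

theorem factorial_mul_cofactor_mul_cofactor_of_even (r m : ℕ) (hrm : Even (r + m)) (t : R)
    (hP : ((r + 1 + m : ℕ) : R) ^ 2 = 0) :
    r ! * (ascPochhammerCofactor r m ((r + 1 + m : ℕ) * t) *
        ascPochhammerCofactor m r ((r + 1 + m : ℕ) * (1 - t))) =
      ((r + m)! : R) ^ 2 *
        (r ! + 2 * (r + 1 + m : ℕ) * (ascPochhammer R r).derivative.eval 1) := by
  set ε : R := ((r + 1 + m : ℕ) : R)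
  set a : R := (r ! : R)
  set b : R := (m ! : R)
  set e : R := (ascPochhammer R r).derivative.eval 1
  set f : R := (ascPochhammer R m).derivative.eval 1
  have hsq (c : R) : (ε * c) ^ 2 = 0 := by rw [mul_pow, hP, zero_mul]
  have hC (n : ℕ) (c : R) := ascPochhammer_eval_one_add_of_sq_eq_zero (R := R) n (hsq c)
  have hC' (n : ℕ) (c : R) := ascPochhammer_eval_one_sub_of_sq_eq_zero (R := R) n (hsq c)
  have hsymm : ε * (b * e) = ε * (a * f) :=
    natCast_mul_factorial_mul_derivative_eval_symm r m hrm hP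
  have hF := cast_factorial_add_of_sq_eq_zero m r (by rwa [show m + 1 + r = r + 1 + m by omega])
  rw [add_comm m r, show m + 1 + r = r + 1 + m by omega] at hF
  have hsign : ((-1 : R) ^ r) * (-1) ^ m = 1 := by rw [← pow_add, hrm.neg_one_pow]
  have hr2 : ((-1 : R) ^ r) ^ 2 = 1 := by rw [← pow_mul, pow_mul']; simp
  have hr_pair : (a - e * (ε * t)) * (a + e * (ε * (1 - t))) =
      a ^ 2 + (1 - 2 * t) * (ε * (a * e)) := by
    linear_combination (-t * (1 - t) * e ^ 2) * hP
  have hm_pair : (b + f * (ε * t)) * (b - f * (ε * (1 - t))) =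
      b ^ 2 - (1 - 2 * t) * (ε * (b * f)) := by
    linear_combination (-t * (1 - t) * f ^ 2) * hP
  calc a * (ascPochhammerCofactor r m (ε * t) * ascPochhammerCofactor m r (ε * (1 - t)))
      = (-1) ^ r * (-1) ^ m * a * ((a - e * (ε * t)) * (a + e * (ε * (1 - t)))) *
          ((b + f * (ε * t)) * (b - f * (ε * (1 - t)))) := by
        simp only [ascPochhammerCofactor, hC, hC']; ring
    _ = a * (a ^ 2 + (1 - 2 * t) * (ε * (a * e))) * (b ^ 2 - (1 - 2 * t) * (ε * (b * f))) := by
        rw [hsign, hr_pair, hm_pair, one_mul]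
    _ = a ^ 3 * b ^ 2 := by
        linear_combination ((1 - 2 * t) * a ^ 2 * b) * hsymm
          - ((1 - 2 * t) ^ 2 * a ^ 2 * b * e * f) * hP
    _ = ((r + m)! : R) ^ 2 * (a + 2 * ε * e) := by
        rw [hF]
        linear_combination (-(a ^ 3 * b ^ 2)) * hr2
          + ((-1) ^ r) ^ 2 * b ^ 2 * (3 * a * e ^ 2 - 2 * e ^ 3 * ε) * hP

theorem factorial_mul_cofactor_mul_cofactor_of_add_eq_one (r m : ℕ) (hrm : r + m = 1) (t : R)
    (hP : ((r + 1 + m : ℕ) : R) ^ 2 = 0) :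
    r ! * (ascPochhammerCofactor r m ((r + 1 + m : ℕ) * t) *
        ascPochhammerCofactor m r ((r + 1 + m : ℕ) * (1 - t))) =
      ((r + m)! : R) ^ 2 *
        (r ! + 2 * (r + 1 + m : ℕ) * (ascPochhammer R r).derivative.eval 1) := by
  obtain ⟨rfl, rfl⟩ | ⟨rfl, rfl⟩ : (r = 0 ∧ m = 1) ∨ (r = 1 ∧ m = 0) := by omega
  all_goals
    simp only [ascPochhammerCofactor, ascPochhammer_zero, ascPochhammer_one, eval_one, eval_X,
      derivative_one, derivative_X] at hP ⊢
    norm_num at hP ⊢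
  · linear_combination (-t ^ 2) * hP
  · linear_combination (2 * t - t ^ 2 - 2) * hP

theorem factorial_mul_cofactor_mul_cofactor_of_sq_eq_zero (r m : ℕ) (hp : (r + 1 + m).Prime)
    (t : R) (hP : ((r + 1 + m : ℕ) : R) ^ 2 = 0) :
    r ! * (ascPochhammerCofactor r m ((r + 1 + m : ℕ) * t) *
        ascPochhammerCofactor m r ((r + 1 + m : ℕ) * (1 - t))) =
      ((r + m)! : R) ^ 2 *
        (r ! + 2 * (r + 1 + m : ℕ) * (ascPochhammer R r).derivative.eval 1) := by
  rcases hp.eq_two_or_odd' with h2 | ⟨k, hk⟩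
  · exact factorial_mul_cofactor_mul_cofactor_of_add_eq_one r m (by omega) t hP
  · exact factorial_mul_cofactor_mul_cofactor_of_even r m ⟨k, by omega⟩ t hP

theorem sq_dvd_factorial_mul_cofactor_mul_cofactor_sub (r m : ℕ) (hp : (r + 1 + m).Prime)
    (t : R) :
    ((r + 1 + m : ℕ) : R) ^ 2 ∣
      r ! * (ascPochhammerCofactor r m ((r + 1 + m : ℕ) * t) *
          ascPochhammerCofactor m r ((r + 1 + m : ℕ) * (1 - t))) -
        ((r + m)! : R) ^ 2 *
          (r ! + 2 * (r + 1 + m : ℕ) * (ascPochhammer R r).derivative.eval 1) := by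
  rw [← Ideal.mem_span_singleton, ← Ideal.Quotient.eq]
  set π := Ideal.Quotient.mk (Ideal.span {((r + 1 + m : ℕ) : R) ^ 2})
  have hP : (π (r + 1 + m : ℕ)) ^ 2 = 0 := by
    rw [← map_pow, Ideal.Quotient.eq_zero_iff_mem]
    exact Ideal.mem_span_singleton_self _
  simpa [map_ascPochhammerCofactor, map_ascPochhammer_derivative_eval, map_ofNat] using
    factorial_mul_cofactor_mul_cofactor_of_sq_eq_zero r m hp _ (by simpa using hP)

theorem exists_factorial_mul_ascPochhammer_eval_mul_eval {n r m : ℕ} (hn : n.Prime)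
    (hnrm : n = r + 1 + m) (t : R) :
    ∃ w : R,
      r ! * (ascPochhammer R n).eval (n * t - r) * (ascPochhammer R n).eval (1 - (n * t - r)) =
        (n ! : R) ^ 2 * (t * (1 - t) * (r ! + 2 * n * (ascPochhammer R r).derivative.eval 1)) +
          n ^ 4 * w := by
  subst hnrm
  obtain ⟨w, hw⟩ := sq_dvd_factorial_mul_cofactor_mul_cofactor_sub r m hn t
  have hX := ascPochhammer_eval_sub_natCast r m (((r + 1 + m : ℕ) : R) * t)
  have hY := ascPochhammer_eval_sub_natCast m r (((r + 1 + m : ℕ) : R) * (1 - t))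
  rw [show m + 1 + r = r + 1 + m by omega] at hY
  have hfact : ((r + 1 + m)! : R) = (r + 1 + m : ℕ) * (r + m)! := by
    rw [show r + 1 + m = (r + m) + 1 by omega, factorial_succ]; push_cast; ring
  refine ⟨t * (1 - t) * w, ?_⟩
  rw [hX, show 1 - ((r + 1 + m : ℕ) * t - r : R) = (r + 1 + m : ℕ) * (1 - t) - m by push_cast; ring,
    hY, hfact]
  linear_combination ((r + 1 + m : ℕ) : R) ^ 2 * t * (1 - t) * hw

end CommRing

theorem ascPochhammer_derivative_eval_one {K : Type*} [Field K] [CharZero K] (n : ℕ) :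
    (ascPochhammer K n).derivative.eval 1 = n ! * (harm n : K) := by
  induction n with
  | zero => simp [harm]
  | succ n ih =>
    rw [ascPochhammer_succ_right, derivative_mul, eval_add, eval_mul, eval_mul, ih,
      ascPochhammer_eval_one, harm, harm, Finset.sum_Icc_succ_top (by omega)]
    simp only [derivative_add, derivative_X, derivative_natCast, eval_add, eval_X, eval_one,
      eval_natCast, eval_zero, factorial_succ]
    push_cast
    field_simp
    ring

theorem PadicInt.exists_eq_mul_sub_zmodRepr_neg {p : ℕ} [Fact p.Prime] (x : ℤ_[p]) :
    ∃ t : ℤ_[p], x = p * t - zmodRepr (-x) := by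
  have hmem := sub_zmodRepr_mem (-x)
  rw [maximalIdeal_eq_span_p, Ideal.mem_span_singleton] at hmem
  obtain ⟨c, hc⟩ := hmem
  exact ⟨-c, by linear_combination -hc⟩

namespace Padic

variable {p : ℕ} [hp : Fact p.Prime]

theorem norm_factorial_self : ‖(p ! : ℚ_[p])‖ = (p : ℝ)⁻¹ := by
  rw [← mul_factorial_pred hp.out.ne_zero, cast_mul, norm_mul, norm_p,
    norm_natCast_eq_one_iff.mpr (hp.out.coprime_factorial_of_lt (sub_one_lt hp.out.ne_zero)),
    mul_one]

theorem norm_div_factorial_sq_sub_le {A B : ℚ_[p]} {c : ℕ} (hc : p.Coprime c) (w : ℤ_[p])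
    (h : c * A = (p ! : ℚ_[p]) ^ 2 * (c * B) + p ^ 4 * w) :
    ‖A / (p ! : ℚ_[p]) ^ 2 - B‖ ≤ (p : ℝ) ^ (-2 : ℤ) := by
  have hc1 : ‖(c : ℚ_[p])‖ = 1 := norm_natCast_eq_one_iff.mpr hc
  have hc0 : (c : ℚ_[p]) ≠ 0 := norm_ne_zero_iff.mp (by rw [hc1]; exact one_ne_zero)
  have hfact0 : (p ! : ℚ_[p]) ≠ 0 := by exact_mod_cast factorial_ne_zero p
  have hdiff : A / (p ! : ℚ_[p]) ^ 2 - B = p ^ 4 * w / (c * (p ! : ℚ_[p]) ^ 2) := by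
    field_simp
    linear_combination h
  rw [hdiff, norm_div, norm_mul, norm_mul, norm_pow, norm_pow, norm_p, norm_factorial_self,
    hc1, ← PadicInt.norm_def]
  calc (p : ℝ)⁻¹ ^ 4 * ‖w‖ / (1 * (p : ℝ)⁻¹ ^ 2) ≤ (p : ℝ)⁻¹ ^ 4 * 1 / (1 * (p : ℝ)⁻¹ ^ 2) := by
        gcongr; exact PadicInt.norm_le_one w
    _ = (p : ℝ) ^ (-2 : ℤ) := by field_simp

end Padic

theorem stmt19 (p : ℕ) [Fact p.Prime] (x : ℤ_[p])
    (s : ℚ_[p]) (hs : s = ((x : ℚ_[p]) + (PadicInt.zmodRepr (-x) : ℚ_[p])) / p) :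
    ‖(↑((ascPochhammer ℤ_[p] p).eval x) : ℚ_[p]) * (↑((ascPochhammer ℤ_[p] p).eval (1 - x)) : ℚ_[p])
          / (Nat.factorial p : ℚ_[p]) ^ 2
        - s * (1 - s) * (1 + 2 * (p : ℚ_[p]) * ((harm (PadicInt.zmodRepr (-x)) : ℚ) : ℚ_[p]))‖
      ≤ (p : ℝ) ^ (-2 : ℤ) := by
  have hprime : p.Prime := Fact.out
  obtain ⟨t, hx⟩ := PadicInt.exists_eq_mul_sub_zmodRepr_neg x
  set r := PadicInt.zmodRepr (-x)
  have hr : r < p := PadicInt.zmodRepr_lt_p _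
  have hst : s = t := by
    have hp0 : (p : ℚ_[p]) ≠ 0 := by exact_mod_cast hprime.ne_zero
    rw [hs, hx]
    push_cast
    field_simp
    ring
  obtain ⟨w, hw⟩ := exists_factorial_mul_ascPochhammer_eval_mul_eval (R := ℤ_[p]) hprime
    (show p = r + 1 + (p - 1 - r) by omega) t
  rw [← hx] at hw
  have hD : (((ascPochhammer ℤ_[p] r).derivative.eval 1 : ℤ_[p]) : ℚ_[p]) = r ! * harm r := by
    have := map_ascPochhammer_derivative_eval (PadicInt.Coe.ringHom (p := p)) r 1
    rwa [map_one, ascPochhammer_derivative_eval_one] at this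
  refine Padic.norm_div_factorial_sq_sub_le (hprime.coprime_factorial_of_lt hr) w ?_
  have hwQ := congrArg ((↑) : ℤ_[p] → ℚ_[p]) hw
  have h2 : ((2 : ℤ_[p]) : ℚ_[p]) = 2 := rfl
  push_cast [h2, hD] at hwQ
  rw [hst]
  linear_combination hwQ
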